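/- For all n ≥ 1: ∑_{i=1}^{n} θ(n,i)·2^{i-1} = n!, where θ(n,i) are the arctanh numbers defined by (1/i!)·arctanh(u)^i = ∑_n θ(n,i) u^n/n!. -/

import Mathlib

open PowerSeries Finset

/-- Unsigned Lah numbers: `L(n,m) = (n!/m!) * C(n-1,m-1)` for `n ≥ m ≥ 1`, else `0`. -/
noncomputable def lahN (n m : ℕ) : ℚ :=
  if 1 ≤ m ∧ m ≤ n then (n.factorial : ℚ) / (m.factorial : ℚ) * ((n - 1).choose (m - 1) : ℚ)
  else 0

/-- Unsigned Stirling numbers of the first kind (permutations of `n` with `m` cycles). -/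
def stirling1 : ℕ → ℕ → ℕ
  | 0, 0 => 1
  | 0, _ + 1 => 0
  | _ + 1, 0 => 0
  | n + 1, m + 1 => n * stirling1 n (m + 1) + stirling1 n m

/-- Stirling numbers of the second kind. -/
def stirling2 : ℕ → ℕ → ℕ
  | 0, 0 => 1
  | 0, _ + 1 => 0
  | _ + 1, 0 => 0
  | n + 1, m + 1 => (m + 1) * stirling2 n (m + 1) + stirling2 n m

/-- `tanh` as a formal power series over `ℚ`: `(e^u - e^{-u}) / (e^u + e^{-u})`. -/
noncomputable def tanhS : PowerSeries ℚ :=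
  (PowerSeries.exp ℚ - PowerSeries.rescale (-1) (PowerSeries.exp ℚ)) *
    (PowerSeries.exp ℚ + PowerSeries.rescale (-1) (PowerSeries.exp ℚ))⁻¹

/-- `arctanh u = (1/2) log((1+u)/(1-u)) = ∑_{j≥0} u^{2j+1}/(2j+1)` as a formal power series. -/
noncomputable def arctanhS : PowerSeries ℚ :=
  PowerSeries.mk fun n => if n % 2 = 1 then (1 : ℚ) / n else 0

/-- Tanh numbers `Θ(n,m)`, defined by `(1/m!) tanh(u)^m = ∑_n Θ(n,m) u^n/n!`. -/
noncomputable def ThetaT (n m : ℕ) : ℚ :=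
  (n.factorial : ℚ) / (m.factorial : ℚ) * PowerSeries.coeff n (tanhS ^ m)

/-- Arctanh numbers `θ(n,m)`, defined by `(1/m!) arctanh(u)^m = ∑_n θ(n,m) u^n/n!`. -/
noncomputable def thetaA (n m : ℕ) : ℚ :=
  (n.factorial : ℚ) / (m.factorial : ℚ) * PowerSeries.coeff n (arctanhS ^ m)

/-!
Summing `θ(n,i) 2^i` over `i` gives `n!` times the `n`-th coefficient of
`exp(2 arctanh u) = (1 + u)/(1 - u) = 1 + 2u + 2u² + ⋯`. The middle identity holds because
`(1 - u) exp(2 arctanh u) / (1 + u)` has derivative zero, as `(1 - u²) arctanh' u = 1`.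
-/

namespace PowerSeries

theorem coeff_pow_eq_zero_of_lt {R : Type*} [CommSemiring R] {f : R⟦X⟧}
    (hf : constantCoeff f = 0) {n i : ℕ} (h : n < i) : coeff n (f ^ i) = 0 :=
  coeff_of_lt_order n ((Nat.cast_lt.mpr h).trans_le (le_order_pow_of_constantCoeff_eq_zero i hf))

variable {A : Type*} [CommRing A] [Algebra ℚ A]

theorem coeff_exp_subst {a : A⟦X⟧} (ha : constantCoeff a = 0) (n : ℕ) :
    coeff n ((exp A).subst a) =
      ∑ i ∈ Finset.range (n + 1), algebraMap ℚ A (1 / i.factorial) * coeff n (a ^ i) := by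
  rw [coeff_subst' (HasSubst.of_constantCoeff_zero' ha),
    finsum_eq_sum_of_support_subset (s := Finset.range (n + 1)) _ fun i hi => ?_]
  · simp only [coeff_exp, smul_eq_mul]
  · contrapose! hi
    simp [coeff_pow_eq_zero_of_lt ha (by simpa [Nat.lt_succ_iff] using hi)]

theorem derivative_exp_subst {a : A⟦X⟧} (ha : constantCoeff a = 0) :
    d⁄dX A ((exp A).subst a) = (exp A).subst a * d⁄dX A a := by
  rw [derivative_subst (HasSubst.of_constantCoeff_zero' ha), derivative_exp]

end PowerSeries

theorem constantCoeff_arctanhS : constantCoeff arctanhS = 0 := by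
  simp [arctanhS, ← coeff_zero_eq_constantCoeff_apply]

theorem coeff_derivative_arctanhS (n : ℕ) :
    coeff n (d⁄dX ℚ arctanhS) = if Even n then 1 else 0 := by
  rw [coeff_derivative, arctanhS, coeff_mk]
  rcases Nat.even_or_odd n with h | h
  · rw [if_pos (by grind), if_pos h]
    field_simp
    push_cast
    ring
  · rw [if_neg (by grind), if_neg (Nat.not_even_iff_odd.mpr h), zero_mul]

theorem one_sub_X_sq_mul_derivative_arctanhS : (1 - X ^ 2) * d⁄dX ℚ arctanhS = 1 := by
  ext n
  rw [sub_mul, one_mul, map_sub, coeff_X_pow_mul', coeff_one]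
  rcases n with _ | _ | n <;> simp [coeff_derivative_arctanhS, Nat.even_add]

theorem constantCoeff_two_smul_arctanhS : constantCoeff ((2 : ℚ) • arctanhS) = 0 := by
  simp [constantCoeff_arctanhS]

theorem one_sub_X_mul_exp_subst_two_smul_arctanhS :
    (1 - X) * (exp ℚ).subst ((2 : ℚ) • arctanhS) = 1 + X := by
  set G := (exp ℚ).subst ((2 : ℚ) • arctanhS)
  have hG : d⁄dX ℚ G = 2 * G * d⁄dX ℚ arctanhS := by
    rw [derivative_exp_subst constantCoeff_two_smul_arctanhS, Derivation.map_smul,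
      mul_smul_comm, two_smul]
    ring
  have hG0 : constantCoeff G = 1 := by
    simpa using coeff_exp_subst constantCoeff_two_smul_arctanhS 0
  set u := (1 + X : ℚ⟦X⟧)⁻¹
  have hu : (1 + X) * u = 1 := PowerSeries.mul_inv_cancel _ (by simp)
  have hdu : d⁄dX ℚ u = -u ^ 2 := by simp [u]
  have hP : (1 - X) * G * u = 1 := by
    apply derivative.ext
    · simp only [Derivation.leibniz, smul_eq_mul, map_sub, derivative_X, derivative_one, hG, hdu]
      linear_combination (G * u * (1 - 2 * (1 - X) * d⁄dX ℚ arctanhS)) * hu +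
        (2 * G * u ^ 2) * one_sub_X_sq_mul_derivative_arctanhS
    · simp [u, hG0]
  linear_combination (1 + X) * hP - (1 - X) * G * hu

theorem coeff_exp_subst_two_smul_arctanhS {n : ℕ} (hn : n ≠ 0) :
    coeff n ((exp ℚ).subst ((2 : ℚ) • arctanhS)) = 2 := by
  have : (exp ℚ).subst ((2 : ℚ) • arctanhS) = PowerSeries.mk 1 * (1 + X) := by
    rw [← one_sub_X_mul_exp_subst_two_smul_arctanhS, ← mul_assoc, mk_one_mul_one_sub_eq_one,
      one_mul]
  obtain ⟨m, rfl⟩ := Nat.exists_eq_succ_of_ne_zero hn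
  rw [this, mul_add, mul_one, map_add, coeff_succ_mul_X]
  norm_num

theorem thetaA_mul_two_pow_pred {n i : ℕ} (hi : 1 ≤ i) :
    thetaA n i * 2 ^ (i - 1) =
      n.factorial / 2 * (1 / i.factorial * coeff n (((2 : ℚ) • arctanhS) ^ i)) := by
  obtain ⟨j, rfl⟩ := Nat.exists_eq_add_of_le' hi
  rw [thetaA, smul_pow, map_smul, smul_eq_mul, Nat.add_sub_cancel, pow_succ]
  ring

/-- ∑_{i=1}^{n} θ(n,i) 2^{i-1} = n! for all n ≥ 1. -/
theorem sum_arctanh_numbers_pow_two (n : ℕ) (hn : 1 ≤ n) :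
    ∑ i ∈ Finset.Icc 1 n, thetaA n i * (2 : ℚ) ^ (i - 1) = (n.factorial : ℚ) := by
  have hn0 : n ≠ 0 := Nat.one_le_iff_ne_zero.mp hn
  have hsum : ∑ i ∈ Icc 1 n, 1 / i.factorial * coeff n (((2 : ℚ) • arctanhS) ^ i) = 2 := by
    refine .trans ?_ (coeff_exp_subst_two_smul_arctanhS hn0)
    rw [coeff_exp_subst constantCoeff_two_smul_arctanhS, range_eq_Ico,
      sum_eq_sum_Ico_succ_bot (by omega), Ico_add_one_right_eq_Icc]
    simp [coeff_one, hn0]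
  rw [sum_congr rfl fun i hi => thetaA_mul_two_pow_pred (mem_Icc.mp hi).1, ← mul_sum, hsum]
  ring
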